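/- Conservativity of fresh-individual assertions in ELH: Let K = (T, A) be an ELH knowledge base, y an individual name not occurring in A, and B an ELH concept. Then for every concept assertion or role assertion φ in which y does not occur, (T, A ∪ {B(y)}) ⊨ φ if and only if (T, A) ⊨ φ. -/

import Mathlib

namespace ELH

/-- ELH concept descriptions over concept names `NC` and role names `NR`. -/
inductive Concept (NC NR : Type) : Type
  | top : Concept NC NR
  | atom : NC → Concept NC NR
  | inter : Concept NC NR → Concept NC NR → Concept NC NR
  | ex : NR → Concept NC NR → Concept NC NR

/-- TBox axioms: concept inclusions and role inclusions. -/
inductive TAxiom (NC NR : Type) : Type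
  | cIncl : Concept NC NR → Concept NC NR → TAxiom NC NR
  | rIncl : NR → NR → TAxiom NC NR

/-- ABox axioms: concept assertions `C(x)` and role assertions `r(x,y)`. -/
inductive Assertion (NC NR NI : Type) : Type
  | cAssert : Concept NC NR → NI → Assertion NC NR NI
  | rAssert : NR → NI → NI → Assertion NC NR NI

/-- An interpretation with nonempty domain, obeying the unique-name assumption. -/
structure Interp (NC NR NI : Type) where
  Dom : Type
  dom_nonempty : Nonempty Dom
  cSem : NC → Set Dom
  rSem : NR → Set (Dom × Dom)
  iSem : NI → Dom
  una : Function.Injective iSem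

/-- Semantics of concepts. -/
def Concept.sem {NC NR NI : Type} (I : Interp NC NR NI) : Concept NC NR → Set I.Dom
  | .top => Set.univ
  | .atom A => I.cSem A
  | .inter c d => c.sem I ∩ d.sem I
  | .ex r c => {a | ∃ b, (a, b) ∈ I.rSem r ∧ b ∈ c.sem I}

/-- Satisfaction of a TBox axiom. -/
def Interp.satT {NC NR NI : Type} (I : Interp NC NR NI) : TAxiom NC NR → Prop
  | .cIncl c d => c.sem I ⊆ d.sem I
  | .rIncl r s => I.rSem r ⊆ I.rSem s

/-- Satisfaction of an ABox axiom. -/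
def Interp.satA {NC NR NI : Type} (I : Interp NC NR NI) : Assertion NC NR NI → Prop
  | .cAssert c x => I.iSem x ∈ c.sem I
  | .rAssert r x y => (I.iSem x, I.iSem y) ∈ I.rSem r

/-- A knowledge base: a TBox and an ABox. -/
structure KB (NC NR NI : Type) where
  tbox : Set (TAxiom NC NR)
  abox : Set (Assertion NC NR NI)

/-- `I` is a model of `K`. -/
def Interp.isModel {NC NR NI : Type} (I : Interp NC NR NI) (K : KB NC NR NI) : Prop :=
  (∀ ax ∈ K.tbox, I.satT ax) ∧ (∀ ax ∈ K.abox, I.satA ax)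

/-- `K ⊨ ax` for an ABox assertion `ax`. -/
def KB.entails {NC NR NI : Type} (K : KB NC NR NI) (ax : Assertion NC NR NI) : Prop :=
  ∀ I : Interp NC NR NI, I.isModel K → I.satA ax

/-- `K ⊨ C ⊑ D`. -/
def KB.entailsSub {NC NR NI : Type} (K : KB NC NR NI) (c d : Concept NC NR) : Prop :=
  ∀ I : Interp NC NR NI, I.isModel K → c.sem I ⊆ d.sem I

end ELH

namespace ELH

/-- The individual names occurring in an assertion. -/
def Assertion.inds {NC NR NI : Type} : Assertion NC NR NI → Set NI
  | .cAssert _ y => {y}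
  | .rAssert _ y z => {y, z}

end ELH

/-! ELH has no negation, so an interpretation can be enlarged by one point that belongs to
every concept name and has a loop for every role name. That point then lies in every ELH
concept, the old points keep their concept memberships, and every TBox axiom survives.
Naming `y` by the new point turns any model of `(T, A)` into a model of `(T, A ∪ {B(y)})`
that agrees with the old one on all assertions avoiding `y`. -/

namespace ELH

variable {NC NR NI : Type}

open Classical in
noncomputable def Interp.adjoinTop (I : Interp NC NR NI) (y : NI) : Interp NC NR NI where
  Dom := Option I.Dom
  dom_nonempty := ⟨none⟩
  cSem A := insert none (some '' I.cSem A)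
  rSem r := insert (none, none) (Prod.map some some '' I.rSem r)
  iSem := Function.update (some ∘ I.iSem) y none
  una := by
    intro a b hab
    by_cases ha : a = y <;> by_cases hb : b = y <;>
      simp_all [Function.update_of_ne, I.una.eq_iff]

namespace Interp.adjoinTop

variable (I : Interp NC NR NI) (y : NI)

lemma iSem_self : (I.adjoinTop y).iSem y = none := by
  simp [adjoinTop]

lemma iSem_of_ne {x : NI} (hx : x ≠ y) : (I.adjoinTop y).iSem x = some (I.iSem x) := by
  simp [adjoinTop, hx]

lemma some_some_mem_rSem {r : NR} {a b : I.Dom} :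
    (some a, some b) ∈ (I.adjoinTop y).rSem r ↔ (a, b) ∈ I.rSem r := by
  show (some a, some b) ∈ insert (none, none) (Prod.map some some '' I.rSem r) ↔ _
  simp

lemma some_none_notMem_rSem {r : NR} {a : I.Dom} : (some a, none) ∉ (I.adjoinTop y).rSem r := by
  show (some a, none) ∉ insert (none, none) (Prod.map some some '' I.rSem r)
  simp

lemma none_mem_sem (C : Concept NC NR) : none ∈ C.sem (I.adjoinTop y) := by
  induction C with
  | top => trivial
  | atom A => exact Set.mem_insert _ _
  | inter c d ihc ihd => exact ⟨ihc, ihd⟩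
  | ex r c ihc => exact ⟨none, Set.mem_insert _ _, ihc⟩

lemma some_mem_sem_iff (C : Concept NC NR) (a : I.Dom) :
    some a ∈ C.sem (I.adjoinTop y) ↔ a ∈ C.sem I := by
  induction C generalizing a with
  | top => exact Iff.rfl
  | atom A =>
    show some a ∈ insert none (some '' I.cSem A) ↔ a ∈ I.cSem A
    simp
  | inter c d ihc ihd => exact and_congr (ihc a) (ihd a)
  | ex r c ihc =>
    constructor
    · rintro ⟨_ | b, hab, hb⟩
      · exact absurd hab (some_none_notMem_rSem I y)
      · exact ⟨b, (some_some_mem_rSem I y).1 hab, (ihc b).1 hb⟩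
    · rintro ⟨b, hab, hb⟩
      exact ⟨some b, (some_some_mem_rSem I y).2 hab, (ihc b).2 hb⟩

lemma satT {ax : TAxiom NC NR} (h : I.satT ax) : (I.adjoinTop y).satT ax := by
  cases ax with
  | cIncl c d =>
    rintro (_ | a) ha
    · exact none_mem_sem I y d
    · exact (some_mem_sem_iff I y d a).2 (h ((some_mem_sem_iff I y c a).1 ha))
  | rIncl r s =>
    rintro p (rfl | ⟨q, hq, rfl⟩)
    · exact Set.mem_insert _ _
    · exact Set.mem_insert_of_mem _ ⟨q, h hq, rfl⟩

lemma satA_iff {ax : Assertion NC NR NI} (hax : y ∉ ax.inds) :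
    (I.adjoinTop y).satA ax ↔ I.satA ax := by
  cases ax with
  | cAssert c x =>
    have hx : x ≠ y := fun h => hax (h ▸ rfl)
    show (I.adjoinTop y).iSem x ∈ _ ↔ _
    rw [iSem_of_ne I y hx]
    exact some_mem_sem_iff I y c _
  | rAssert r x z =>
    have hx : x ≠ y := fun h => hax (h ▸ Set.mem_insert _ _)
    have hz : z ≠ y := fun h => hax (h ▸ Set.mem_insert_of_mem _ rfl)
    show ((I.adjoinTop y).iSem x, (I.adjoinTop y).iSem z) ∈ _ ↔ _
    rw [iSem_of_ne I y hx, iSem_of_ne I y hz]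
    exact some_some_mem_rSem I y

lemma isModel_union_singleton {K : KB NC NR NI} (hI : I.isModel K)
    (hy : ∀ ax ∈ K.abox, y ∉ ax.inds) (B : Concept NC NR) :
    (I.adjoinTop y).isModel ⟨K.tbox, K.abox ∪ {Assertion.cAssert B y}⟩ := by
  refine ⟨fun ax hax => satT I y (hI.1 ax hax), ?_⟩
  rintro ax (hax | rfl)
  · exact (satA_iff I y (hy ax hax)).2 (hI.2 ax hax)
  · show (I.adjoinTop y).iSem y ∈ _
    rw [iSem_self]
    exact none_mem_sem I y B

end Interp.adjoinTop

lemma KB.entails.mono {K K' : KB NC NR NI} {φ : Assertion NC NR NI} (h : K.entails φ)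
    (hT : K.tbox ⊆ K'.tbox) (hA : K.abox ⊆ K'.abox) : K'.entails φ :=
  fun I hI => h I ⟨fun ax hax => hI.1 ax (hT hax), fun ax hax => hI.2 ax (hA hax)⟩

end ELH

open ELH in
theorem fresh_individual_conservative_general {NC NR NI : Type}
    (K : KB NC NR NI)
    (y : NI) (hy : ∀ ax ∈ K.abox, y ∉ ax.inds)
    (B : Concept NC NR) (φ : Assertion NC NR NI) (hφ : y ∉ φ.inds) :
    KB.entails ⟨K.tbox, K.abox ∪ {Assertion.cAssert B y}⟩ φ ↔ K.entails φ := by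
  refine ⟨fun h I hI => ?_, fun h => h.mono subset_rfl Set.subset_union_left⟩
  exact (Interp.adjoinTop.satA_iff I y hφ).1
    (h _ (Interp.adjoinTop.isModel_union_singleton I y hI hy B))

open ELH in
/-- If `y` does not occur in `A`, then for every assertion `φ` not
mentioning `y`, `(T, A ∪ {B(y)}) ⊨ φ` iff `(T, A) ⊨ φ`. -/
theorem fresh_individual_conservative {NC NR NI : Type} [Finite NC] [Finite NR] [Finite NI]
    (K : KB NC NR NI) (hT : K.tbox.Finite) (hA : K.abox.Finite)
    (y : NI) (hy : ∀ ax ∈ K.abox, y ∉ ax.inds)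
    (B : Concept NC NR) (φ : Assertion NC NR NI) (hφ : y ∉ φ.inds) :
    KB.entails ⟨K.tbox, K.abox ∪ {Assertion.cAssert B y}⟩ φ ↔ K.entails φ :=
  fresh_individual_conservative_general K y hy B φ hφ
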